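/- arXiv:1101.0449 — 4 statements merged into one kernel-verified Lean document; each statement's English description precedes it below -/
import Mathlib

section
/- Let h : ℝ → ℝ be continuously differentiable on [0,∞) with h' > 0 on [0,∞), let b* ∈ [0,∞) satisfy h'(b*) ≤ h'(u) for all u ≥ 0, suppose h' is nondecreasing on [b*,∞), and suppose h(b*) ≥ 0. Then for every x > b*, x − b* + h(b*)/h'(b*) ≥ h(x)/h'(x); that is, V_{b*}(x) ≥ V_x(x). -/
/-! Since `h'` is nondecreasing on `[b*, x]`, the mean value inequality gives
`h x - h b* ≤ h' x * (x - b*)`; dividing by `h' x` and using `0 ≤ h b*` together with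
`h' b* ≤ h' x` turns `h b* / h' x` into the larger `h b* / h' b*`. -/

open Set

/-- The barrier value function `V_b`: `V_b x = 0` for `x < 0`,
`V_b x = h x / h' b` for `0 ≤ x ≤ b`, and `V_b x = x - b + h b / h' b` for `x > b`.
In particular `V_x x = h x / h' x` and `V_{b*} x = x - b* + h b* / h' b*` for `x > b*`. -/
noncomputable def barrierValue (h h' : ℝ → ℝ) (b : ℝ) (x : ℝ) : ℝ :=
  if x < 0 then 0 else if x ≤ b then h x / h' b else x - b + h b / h' b

theorem MonotoneOn.image_sub_le_mul_sub_of_hasDerivWithinAt {f f' : ℝ → ℝ} {a b : ℝ}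
    (hmono : MonotoneOn f' (Icc a b)) (hab : a ≤ b)
    (hf : ∀ u ∈ Icc a b, HasDerivWithinAt f (f' u) (Icc a b) u) :
    f b - f a ≤ f' b * (b - a) := by
  have hderiv : ∀ u ∈ interior (Icc a b), HasDerivAt f (f' u) u := by
    intro u hu
    rw [interior_Icc] at hu
    exact (hf u (Ioo_subset_Icc_self hu)).hasDerivAt (Icc_mem_nhds hu.1 hu.2)
  refine (convex_Icc a b).image_sub_le_mul_sub_of_deriv_le
    (fun u hu => (hf u hu).continuousWithinAt)
    (fun u hu => (hderiv u hu).differentiableAt.differentiableWithinAt)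
    (fun u hu => ?_) a (left_mem_Icc.2 hab) b (right_mem_Icc.2 hab) hab
  rw [(hderiv u hu).deriv]
  rw [interior_Icc] at hu
  exact hmono (Ioo_subset_Icc_self hu) (right_mem_Icc.2 hab) hu.2.le

theorem div_le_add_div_of_sub_le_mul {A B p q d : ℝ} (hp : 0 < p) (hpq : p ≤ q) (hB : 0 ≤ B)
    (h : A - B ≤ q * d) : A / q ≤ d + B / p := by
  have hq : 0 < q := hp.trans_le hpq
  calc A / q ≤ d + B / q := by
        rw [div_le_iff₀ hq, add_mul, div_mul_cancel₀ B hq.ne']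
        linarith
    _ ≤ d + B / p := by gcongr

section barrierValue

variable (h h' : ℝ → ℝ)

theorem barrierValue_self {x : ℝ} (hx : 0 ≤ x) : barrierValue h h' x x = h x / h' x := by
  simp [barrierValue, hx.not_gt]

theorem barrierValue_of_lt {b x : ℝ} (hx : 0 ≤ x) (hbx : b < x) :
    barrierValue h h' b x = x - b + h b / h' b := by
  simp [barrierValue, hx.not_gt, hbx.not_ge]

end barrierValue

theorem barrier_value_dominates_general
    (h h' : ℝ → ℝ)
    (hderiv : ∀ u ∈ Ici (0 : ℝ), HasDerivWithinAt h (h' u) (Ici 0) u)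
    (hpos : ∀ u ∈ Ici (0 : ℝ), 0 < h' u)
    (bstar : ℝ) (hb : 0 ≤ bstar)
    (hmono : MonotoneOn h' (Ici bstar))
    (hnonneg : 0 ≤ h bstar) :
    ∀ x > bstar, h x / h' x ≤ x - bstar + h bstar / h' bstar ∧
      barrierValue h h' x x ≤ barrierValue h h' bstar x := by
  intro x hx
  have hx0 : 0 ≤ x := hb.trans hx.le
  have hIcc : Icc bstar x ⊆ Ici 0 := fun u hu => hb.trans hu.1
  have hincr : h x - h bstar ≤ h' x * (x - bstar) :=
    (hmono.mono Icc_subset_Ici_self).image_sub_le_mul_sub_of_hasDerivWithinAt hx.le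
      fun u hu => (hderiv u (hIcc hu)).mono hIcc
  have hdom : h x / h' x ≤ x - bstar + h bstar / h' bstar :=
    div_le_add_div_of_sub_le_mul (hpos bstar hb) (hmono self_mem_Ici hx.le hx.le) hnonneg hincr
  refine ⟨hdom, ?_⟩
  rwa [barrierValue_self h h' hx0, barrierValue_of_lt h h' hx0 hx]

/-- If `h` is continuously differentiable on `[0,∞)` with `h' > 0` there,
`b* ∈ [0,∞)` satisfies `h' b* ≤ h' u` for all `u ≥ 0`, `h'` is nondecreasing on
`[b*,∞)`, and `h b* ≥ 0`, then for every `x > b*` one has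
`x - b* + h b* / h' b* ≥ h x / h' x`, that is, `V_{b*} x ≥ V_x x`. -/
theorem barrier_value_dominates
    (h h' : ℝ → ℝ)
    (hderiv : ∀ u ∈ Ici (0 : ℝ), HasDerivWithinAt h (h' u) (Ici 0) u)
    (hcont : ContinuousOn h' (Ici 0))
    (hpos : ∀ u ∈ Ici (0 : ℝ), 0 < h' u)
    (bstar : ℝ) (hb : 0 ≤ bstar)
    (hmin : ∀ u ≥ (0 : ℝ), h' bstar ≤ h' u)
    (hmono : MonotoneOn h' (Ici bstar))
    (hnonneg : 0 ≤ h bstar) :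
    ∀ x > bstar, h x / h' x ≤ x - bstar + h bstar / h' bstar ∧
      barrierValue h h' x x ≤ barrierValue h h' bstar x :=
  barrier_value_dominates_general h h' hderiv hpos bstar hb hmono hnonneg
end

section
/- Let h : ℝ → ℝ be differentiable on (0,∞) with h' > 0, suppose h' is convex on (0,∞), and let b* ∈ (0,∞) satisfy h'(b*) ≤ h'(x) for all x > 0. Then the barrier value function V_{b*} (equal to h(x)/h'(b*) on (0,b*] and to x − b* + h(b*)/h'(b*) on (b*,∞)) is concave on (0,∞). -/
/-!
On `(0, b*]` the slope of `V_{b*}` is `h' / h'(b*)` and beyond `b*` it is `1`; both equal `1` at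
`b*`, so `V_{b*}` is differentiable on `(0, ∞)`. A convex function decreases to the left of a
global minimiser, so this slope decreases from `h' / h'(b*) ≥ 1` down to `1` and then stays
constant. An antitone derivative gives concavity.
-/

open Set

theorem ConvexOn.antitoneOn_inter_Iic_of_isMinOn {𝕜 β : Type*} [Field 𝕜] [LinearOrder 𝕜]
    [IsStrictOrderedRing 𝕜] [AddCommMonoid β] [LinearOrder β] [IsOrderedAddMonoid β]
    [Module 𝕜 β] [PosSMulStrictMono 𝕜 β] {s : Set 𝕜} {f : 𝕜 → β} {b : 𝕜}
    (hf : ConvexOn 𝕜 s f) (hmin : IsMinOn f s b) (hb : b ∈ s) : AntitoneOn f (s ∩ Iic b) := by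
  intro x hx y hy hxy
  have hy_seg : y ∈ segment 𝕜 x b := by
    rw [segment_eq_Icc (hxy.trans hy.2)]
    exact ⟨hxy, hy.2⟩
  calc f y ≤ max (f x) (f b) := hf.le_on_segment hx.1 hb hy_seg
    _ = f x := max_eq_left (isMinOn_iff.1 hmin x hx.1)

theorem AntitoneOn.concaveOn_of_hasDerivAt {D : Set ℝ} (hD : Convex ℝ D) (hD_open : IsOpen D)
    {f f' : ℝ → ℝ} (hf : ∀ x ∈ D, HasDerivAt f (f' x) x) (hf' : AntitoneOn f' D) :
    ConcaveOn ℝ D f := by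
  refine AntitoneOn.concaveOn_of_deriv hD (fun x hx => (hf x hx).continuousAt.continuousWithinAt)
    ?_ ?_ <;> rw [hD_open.interior_eq]
  · exact fun x hx => (hf x hx).differentiableAt.differentiableWithinAt
  · exact hf'.congr fun x hx => ((hf x hx).deriv).symm

noncomputable def barrierSlope (h' : ℝ → ℝ) (b x : ℝ) : ℝ :=
  if x ≤ b then h' x / h' b else 1

section BarrierValue

variable {h h' : ℝ → ℝ} {b x : ℝ}

theorem barrierValue_of_mem_Icc (hx : x ∈ Icc 0 b) : barrierValue h h' b x = h x / h' b := by
  simp [barrierValue, not_lt.2 hx.1, hx.2]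

theorem barrierValue_of_le (hb : 0 ≤ b) (hx : b ≤ x) :
    barrierValue h h' b x = x - b + h b / h' b := by
  rcases hx.eq_or_lt with rfl | hlt
  · simp [barrierValue, not_lt.2 hb]
  · simp [barrierValue, not_lt.2 (hb.trans hlt.le), not_le.2 hlt]

theorem hasDerivWithinAt_barrierValue_Iic (hd : HasDerivAt h (h' x) x) (hx : 0 < x)
    (hxb : x ≤ b) : HasDerivWithinAt (barrierValue h h' b) (h' x / h' b) (Iic b) x := by
  have hev : barrierValue h h' b =ᶠ[nhdsWithin x (Iic b)] fun y => h y / h' b := by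
    filter_upwards [self_mem_nhdsWithin, nhdsWithin_le_nhds (Ioi_mem_nhds hx)] with y hyb hy
    exact barrierValue_of_mem_Icc ⟨le_of_lt hy, hyb⟩
  exact (hd.div_const _).hasDerivWithinAt.congr_of_eventuallyEq hev
    (barrierValue_of_mem_Icc ⟨hx.le, hxb⟩)

theorem hasDerivWithinAt_barrierValue_Ici (hb : 0 ≤ b) (hx : b ≤ x) :
    HasDerivWithinAt (barrierValue h h' b) 1 (Ici b) x := by
  have hlin : HasDerivAt (fun y => y - b + h b / h' b) 1 x :=
    ((hasDerivAt_id x).sub_const b).add_const _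
  exact hlin.hasDerivWithinAt.congr (fun y hy => barrierValue_of_le hb hy)
    (barrierValue_of_le hb hx)

theorem hasDerivAt_barrierValue (hderiv : ∀ x ∈ Ioi (0 : ℝ), HasDerivAt h (h' x) x)
    (hb : 0 ≤ b) (hb' : h' b ≠ 0) (hx : 0 < x) :
    HasDerivAt (barrierValue h h' b) (barrierSlope h' b x) x := by
  rcases lt_trichotomy x b with hlt | rfl | hgt
  · rw [barrierSlope, if_pos hlt.le]
    exact (hasDerivWithinAt_barrierValue_Iic (hderiv x hx) hx hlt.le).hasDerivAt
      (Iic_mem_nhds hlt)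
  · rw [barrierSlope, if_pos le_rfl, div_self hb']
    have hleft := hasDerivWithinAt_barrierValue_Iic (hderiv x hx) hx le_rfl
    rw [div_self hb'] at hleft
    simpa only [Iic_union_Ici, hasDerivWithinAt_univ] using
      hleft.union (hasDerivWithinAt_barrierValue_Ici hb le_rfl)
  · rw [barrierSlope, if_neg (not_le.2 hgt)]
    exact (hasDerivWithinAt_barrierValue_Ici hb hgt.le).hasDerivAt (Ici_mem_nhds hgt)

theorem antitoneOn_barrierSlope (hconv : ConvexOn ℝ (Ioi 0) h') (hmin : IsMinOn h' (Ioi 0) b)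
    (hb : 0 < b) (hb' : 0 < h' b) : AntitoneOn (barrierSlope h' b) (Ioi 0) := by
  have hanti := hconv.antitoneOn_inter_Iic_of_isMinOn hmin hb
  intro x hx y hy hxy
  unfold barrierSlope
  split_ifs with hyb hxb hxb
  · exact div_le_div_of_nonneg_right (hanti ⟨hx, hxb⟩ ⟨hy, hyb⟩ hxy) hb'.le
  · exact absurd (hxy.trans hyb) hxb
  · exact (one_le_div hb').2 (isMinOn_iff.1 hmin x hx)
  · exact le_rfl

end BarrierValue

/-- If `h` is differentiable on `(0,∞)` with `h' > 0` there, `h'` is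
convex on `(0,∞)`, and `b* ∈ (0,∞)` satisfies `h' b* ≤ h' x` for all `x > 0`, then
the barrier value function `V_{b*}` (equal to `h x / h' b*` on `(0, b*]` and to
`x - b* + h b* / h' b*` on `(b*, ∞)`) is concave on `(0,∞)`. -/
theorem barrier_value_concave
    (h h' : ℝ → ℝ)
    (hderiv : ∀ x ∈ Ioi (0 : ℝ), HasDerivAt h (h' x) x)
    (hpos : ∀ x ∈ Ioi (0 : ℝ), 0 < h' x)
    (hconv : ConvexOn ℝ (Ioi 0) h')
    (bstar : ℝ) (hb : 0 < bstar)
    (hmin : ∀ x > (0 : ℝ), h' bstar ≤ h' x) :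
    ConcaveOn ℝ (Ioi 0) (barrierValue h h' bstar) := by
  have hc : 0 < h' bstar := hpos bstar hb
  exact (antitoneOn_barrierSlope hconv (isMinOn_iff.2 hmin) hb hc).concaveOn_of_hasDerivAt
    (convex_Ioi 0) isOpen_Ioi fun x hx => hasDerivAt_barrierValue hderiv hb.le hc.ne' hx
end

section
/- If g : (0,∞) → [0,∞) is measurable and log-convex on (0,∞), and ∫_x^∞ g(t) dt < ∞ for every x > 0, then the tail function Ḡ(x) = ∫_x^∞ g(t) dt is log-convex on (0,∞). -/
open Set MeasureTheory

/-- A function `f : I → [0,∞)` is log-convex on `s ⊆ ℝ` if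
`f (t·x + (1-t)·y) ≤ f x ^ t * f y ^ (1-t)` for all `x, y ∈ s` and `t ∈ [0,1]`
(real powers). -/
def LogConvexOn (s : Set ℝ) (f : ℝ → ℝ) : Prop :=
  ∀ x ∈ s, ∀ y ∈ s, ∀ t : ℝ, 0 ≤ t → t ≤ 1 →
    f (t * x + (1 - t) * y) ≤ f x ^ t * f y ^ (1 - t)

/-!
Writing `Ḡ x = ∫_{r > 0} g (x + r) dr`, log-convexity of `g` bounds the integrand at
`t x + (1 - t) y` by `g (x + r) ^ t * g (y + r) ^ (1 - t)`, and Hölder's inequality with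
exponents `1 / t` and `1 / (1 - t)` bounds the integral of that product by `Ḡ x ^ t * Ḡ y ^ (1 - t)`.
-/

theorem integral_le_integral_rpow_mul_integral_rpow {α : Type*} [MeasurableSpace α]
    {μ : Measure α} {f g h : α → ℝ} {t : ℝ} (ht0 : 0 ≤ t) (ht1 : t ≤ 1)
    (hf : Integrable f μ) (hg : Integrable g μ) (hf0 : 0 ≤ᵐ[μ] f) (hg0 : 0 ≤ᵐ[μ] g)
    (hh0 : 0 ≤ᵐ[μ] h) (hle : ∀ᵐ a ∂μ, h a ≤ f a ^ t * g a ^ (1 - t)) :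
    ∫ a, h a ∂μ ≤ (∫ a, f a ∂μ) ^ t * (∫ a, g a ∂μ) ^ (1 - t) := by
  have hF := integral_nonneg_of_ae hf0
  have hG := integral_nonneg_of_ae hg0
  rw [← ENNReal.ofReal_le_ofReal_iff (by positivity)]
  calc ENNReal.ofReal (∫ a, h a ∂μ)
      ≤ ∫⁻ a, ENNReal.ofReal (h a) ∂μ :=
        (Real.ofReal_le_enorm _).trans <| (enorm_integral_le_lintegral_enorm _).trans_eq <|
          lintegral_congr_ae <| hh0.mono fun a ha => Real.enorm_of_nonneg ha
    _ ≤ ∫⁻ a, ENNReal.ofReal (f a) ^ t * ENNReal.ofReal (g a) ^ (1 - t) ∂μ := by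
        refine lintegral_mono_ae ?_
        filter_upwards [hf0, hg0, hle] with a hfa hga ha
        rw [ENNReal.ofReal_rpow_of_nonneg hfa ht0,
          ENNReal.ofReal_rpow_of_nonneg hga (sub_nonneg.2 ht1),
          ← ENNReal.ofReal_mul (Real.rpow_nonneg hfa t)]
        exact ENNReal.ofReal_le_ofReal ha
    _ ≤ (∫⁻ a, ENNReal.ofReal (f a) ∂μ) ^ t * (∫⁻ a, ENNReal.ofReal (g a) ∂μ) ^ (1 - t) :=
        ENNReal.lintegral_mul_norm_pow_le hf.aemeasurable.ennreal_ofReal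
          hg.aemeasurable.ennreal_ofReal ht0 (sub_nonneg.2 ht1) (by ring)
    _ = ENNReal.ofReal ((∫ a, f a ∂μ) ^ t * (∫ a, g a ∂μ) ^ (1 - t)) := by
        rw [← ofReal_integral_eq_lintegral_ofReal hf hf0,
          ← ofReal_integral_eq_lintegral_ofReal hg hg0, ENNReal.ofReal_mul (by positivity),
          ENNReal.ofReal_rpow_of_nonneg hF ht0, ENNReal.ofReal_rpow_of_nonneg hG (sub_nonneg.2 ht1)]

section Translation

variable {E : Type*} [NormedAddCommGroup E] (f : ℝ → E) (x : ℝ)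

theorem preimage_const_add_Ioi_self : (x + ·) ⁻¹' Ioi x = Ioi 0 := by
  rw [preimage_const_add_Ioi, sub_self]

theorem integrableOn_Ioi_zero_comp_const_add_iff :
    IntegrableOn (fun r => f (x + r)) (Ioi 0) ↔ IntegrableOn f (Ioi x) := by
  rw [← preimage_const_add_Ioi_self x]
  exact (measurePreserving_add_left volume x).integrableOn_comp_preimage
    (measurableEmbedding_addLeft x)

variable [NormedSpace ℝ E]

theorem setIntegral_Ioi_zero_comp_const_add :
    ∫ r in Ioi 0, f (x + r) = ∫ s in Ioi x, f s := by
  rw [← preimage_const_add_Ioi_self x]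
  exact (measurePreserving_add_left volume x).setIntegral_preimage_emb
    (measurableEmbedding_addLeft x) f _

end Translation

theorem logConvexOn_tail_general (g : ℝ → ℝ)
    (hnonneg : ∀ x ∈ Ioi (0 : ℝ), 0 ≤ g x)
    (hlc : LogConvexOn (Ioi 0) g)
    (hint : ∀ x ∈ Ioi (0 : ℝ), IntegrableOn g (Ioi x)) :
    LogConvexOn (Ioi 0) (fun x => ∫ t in Ioi x, g t) := by
  intro x hx y hy t ht0 ht1
  have hshift_nonneg : ∀ a ∈ Ioi (0 : ℝ), 0 ≤ᵐ[volume.restrict (Ioi 0)] fun r => g (a + r) :=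
    fun a ha => ae_restrict_of_forall_mem measurableSet_Ioi fun r hr =>
      hnonneg _ (mem_Ioi.2 (add_pos ha hr))
  have hz : t * x + (1 - t) * y ∈ Ioi (0 : ℝ) :=
    convex_Ioi (0 : ℝ) hx hy ht0 (sub_nonneg.2 ht1) (add_sub_cancel t 1)
  dsimp only
  rw [← setIntegral_Ioi_zero_comp_const_add g x, ← setIntegral_Ioi_zero_comp_const_add g y,
    ← setIntegral_Ioi_zero_comp_const_add g (t * x + (1 - t) * y)]
  refine integral_le_integral_rpow_mul_integral_rpow ht0 ht1
    ((integrableOn_Ioi_zero_comp_const_add_iff g x).2 (hint x hx))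
    ((integrableOn_Ioi_zero_comp_const_add_iff g y).2 (hint y hy))
    (hshift_nonneg x hx) (hshift_nonneg y hy) (hshift_nonneg _ hz) ?_
  refine ae_restrict_of_forall_mem measurableSet_Ioi fun r hr => ?_
  convert hlc (x + r) (mem_Ioi.2 (add_pos hx hr)) (y + r) (mem_Ioi.2 (add_pos hy hr))
    t ht0 ht1 using 2
  ring

/-- If `g : (0,∞) → [0,∞)` is measurable and log-convex on `(0,∞)`,
and `∫_x^∞ g(t) dt < ∞` for every `x > 0`, then the tail function
`Ḡ x = ∫_x^∞ g(t) dt` is log-convex on `(0,∞)`. -/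
theorem logConvexOn_tail (g : ℝ → ℝ)
    (hmeas : Measurable g)
    (hnonneg : ∀ x ∈ Ioi (0 : ℝ), 0 ≤ g x)
    (hlc : LogConvexOn (Ioi 0) g)
    (hint : ∀ x ∈ Ioi (0 : ℝ), IntegrableOn g (Ioi x)) :
    LogConvexOn (Ioi 0) (fun x => ∫ t in Ioi x, g t) :=
  logConvexOn_tail_general g hnonneg hlc hint
end

section
/- Let n ≥ 1 and let real numbers satisfy the interlacing condition 0 < R_1 < α_1 < R_2 < α_2 < ⋯ < α_n < R_{n+1}. For j = 1, …, n+1 define A_j = [∏_{k=1}^n (1 − R_j/α_k)] / [∏_{k=1, k≠j}^{n+1} (1 − R_j/R_k)]. Then A_j > 0 for every j, and consequently the function x ↦ ∑_{j=1}^{n+1} A_j e^{−R_j x} is completely monotone on (0,∞). -/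
open Set Finset

/-- A function `f : ℝ → ℝ` is completely monotone on `(0,∞)` if it is infinitely
differentiable there and `(-1)ⁿ f⁽ⁿ⁾(x) ≥ 0` for every `n ≥ 0` and every `x > 0`. -/
def CompletelyMonotoneOn (f : ℝ → ℝ) : Prop :=
  (∀ n : ℕ, ContDiffOn ℝ n f (Ioi 0)) ∧
    ∀ n : ℕ, ∀ x ∈ Ioi (0 : ℝ), 0 ≤ (-1 : ℝ) ^ n * iteratedDerivWithin n f (Ioi 0) x

/-! Pair the factor `1 - R j / α k` of the numerator with the factor `1 - R j / R (j.succAbove k)`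
of the denominator. By interlacing, `α k` and `R (j.succAbove k)` both lie on the same side of
`R j` (both below it when `k < j`, both above otherwise), so each pair has positive product and
`A j > 0`. Complete monotonicity then holds termwise: the `m`-th derivative of
`A j * exp (-R j * x)` is `A j * (-R j) ^ m * exp (-R j * x)`, whose sign is `(-1) ^ m`. -/

theorem Fin.prod_univ_erase_eq_prod_succAbove {M : Type*} [CommMonoid M] {n : ℕ}
    (f : Fin (n + 1) → M) (j : Fin (n + 1)) :
    ∏ k ∈ univ.erase j, f k = ∏ k, f (j.succAbove k) := by
  rw [← compl_singleton, ← Fin.image_succAbove_univ,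
    prod_image Fin.succAbove_right_injective.injOn]

theorem one_sub_div_mul_one_sub_div_pos {a b x : ℝ} (ha : 0 < a) (hb : 0 < b)
    (h : (x < a ∧ x < b) ∨ (a < x ∧ b < x)) : 0 < (1 - x / a) * (1 - x / b) := by
  rw [one_sub_div ha.ne', one_sub_div hb.ne', div_mul_div_comm]
  refine div_pos ?_ (mul_pos ha hb)
  rcases h with ⟨hxa, hxb⟩ | ⟨hax, hbx⟩
  · exact mul_pos (sub_pos.2 hxa) (sub_pos.2 hxb)
  · exact mul_pos_of_neg_of_neg (sub_neg.2 hax) (sub_neg.2 hbx)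

section Interlacing

variable {n : ℕ} {R : Fin (n + 1) → ℝ} {α : Fin n → ℝ}
  (hinter : ∀ k : Fin n, R k.castSucc < α k ∧ α k < R k.succ)
include hinter

theorem strictMono_of_interlacing : StrictMono R :=
  Fin.strictMono_iff_lt_succ.2 fun k => (hinter k).1.trans (hinter k).2

theorem interlacing_same_side (j : Fin (n + 1)) (k : Fin n) :
    (R j < α k ∧ R j < R (j.succAbove k)) ∨ (α k < R j ∧ R (j.succAbove k) < R j) := by
  have hR := strictMono_of_interlacing hinter
  by_cases hkj : k.castSucc < j
  · right
    rw [Fin.succAbove_of_castSucc_lt _ _ hkj]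
    exact ⟨(hinter k).2.trans_le (hR.monotone (Fin.castSucc_lt_iff_succ_le.1 hkj)), hR hkj⟩
  · left
    have hjk : j ≤ k.castSucc := le_of_not_gt hkj
    rw [Fin.succAbove_of_le_castSucc _ _ hjk]
    exact ⟨(hR.monotone hjk).trans_lt (hinter k).1, hR (hjk.trans_lt Fin.castSucc_lt_succ)⟩

variable (hR0 : 0 < R 0)
include hR0

theorem pos_of_interlacing (j : Fin (n + 1)) : 0 < R j :=
  hR0.trans_le ((strictMono_of_interlacing hinter).monotone (Fin.zero_le j))

theorem interlacing_coefficient_pos (j : Fin (n + 1)) :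
    0 < (∏ k, (1 - R j / α k)) / ∏ k ∈ univ.erase j, (1 - R j / R k) := by
  have hα : ∀ k, 0 < α k := fun k => (pos_of_interlacing hinter hR0 _).trans (hinter k).1
  have hprod : 0 < (∏ k, (1 - R j / α k)) * ∏ k ∈ univ.erase j, (1 - R j / R k) := by
    rw [Fin.prod_univ_erase_eq_prod_succAbove, ← prod_mul_distrib]
    exact prod_pos fun k _ => one_sub_div_mul_one_sub_div_pos (hα k)
      (pos_of_interlacing hinter hR0 _) (interlacing_same_side hinter j k)
  exact div_pos_iff.2 (mul_pos_iff.1 hprod)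

end Interlacing

theorem iteratedDeriv_sum_mul_exp {ι : Type*} (s : Finset ι) (c r : ι → ℝ) (m : ℕ) (x : ℝ) :
    iteratedDeriv m (fun y => ∑ i ∈ s, c i * Real.exp (r i * y)) x =
      ∑ i ∈ s, c i * (r i ^ m * Real.exp (r i * x)) := by
  rw [iteratedDeriv_fun_sum fun i _ => by fun_prop]
  simp only [iteratedDeriv_const_mul_field, iteratedDeriv_exp_const_mul]

theorem completelyMonotoneOn_sum_mul_exp_neg {ι : Type*} (s : Finset ι) {c r : ι → ℝ}
    (hc : ∀ i ∈ s, 0 ≤ c i) (hr : ∀ i ∈ s, 0 ≤ r i) :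
    CompletelyMonotoneOn fun x => ∑ i ∈ s, c i * Real.exp (-(r i) * x) := by
  refine ⟨fun m => ContDiff.contDiffOn (by fun_prop), fun m x hx => ?_⟩
  rw [iteratedDerivWithin_of_isOpen isOpen_Ioi hx, iteratedDeriv_sum_mul_exp, mul_sum]
  refine sum_nonneg fun i hi => ?_
  have hsign : (-1 : ℝ) ^ m * (c i * ((-r i) ^ m * Real.exp (-r i * x))) =
      c i * r i ^ m * Real.exp (-r i * x) := by
    have hpow : (-1 : ℝ) ^ m * (-r i) ^ m = r i ^ m := by rw [← mul_pow, neg_one_mul, neg_neg]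
    linear_combination c i * Real.exp (-r i * x) * hpow
  rw [hsign]
  exact mul_nonneg (mul_nonneg (hc i hi) (pow_nonneg (hr i hi) m)) (Real.exp_nonneg _)

theorem interlacing_coefficients_pos_and_completelyMonotone_general
    (n : ℕ)
    (R : Fin (n + 1) → ℝ) (α : Fin n → ℝ)
    (hR0 : 0 < R 0)
    (hinter : ∀ k : Fin n, R k.castSucc < α k ∧ α k < R k.succ)
    (A : Fin (n + 1) → ℝ)
    (hA : A = fun j =>
      (∏ k : Fin n, (1 - R j / α k)) /
        (∏ k ∈ Finset.univ.erase j, (1 - R j / R k))) :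
    (∀ j, 0 < A j) ∧
    CompletelyMonotoneOn (fun x => ∑ j : Fin (n + 1), A j * Real.exp (-(R j) * x)) := by
  have hA_pos : ∀ j, 0 < A j := by
    subst hA
    exact interlacing_coefficient_pos hinter hR0
  exact ⟨hA_pos, completelyMonotoneOn_sum_mul_exp_neg univ (fun j _ => (hA_pos j).le)
    fun j _ => (pos_of_interlacing hinter hR0 j).le⟩

/-- Let `n ≥ 1` and suppose the reals interlace:
`0 < R₁ < α₁ < R₂ < α₂ < ⋯ < αₙ < R_{n+1}` (here `R : Fin (n+1) → ℝ` lists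
`R₁, …, R_{n+1}` and `α : Fin n → ℝ` lists `α₁, …, αₙ`). For each `j` define
`A j = (∏ₖ (1 - R j / α k)) / (∏_{k ≠ j} (1 - R j / R k))`. Then `A j > 0` for
every `j`, and consequently `x ↦ ∑ⱼ A j · e^{-R j · x}` is completely monotone on
`(0,∞)`. -/
theorem interlacing_coefficients_pos_and_completelyMonotone
    (n : ℕ) (hn : 1 ≤ n)
    (R : Fin (n + 1) → ℝ) (α : Fin n → ℝ)
    (hR0 : 0 < R 0)
    (hinter : ∀ k : Fin n, R k.castSucc < α k ∧ α k < R k.succ)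
    (A : Fin (n + 1) → ℝ)
    (hA : A = fun j =>
      (∏ k : Fin n, (1 - R j / α k)) /
        (∏ k ∈ Finset.univ.erase j, (1 - R j / R k))) :
    (∀ j, 0 < A j) ∧
    CompletelyMonotoneOn (fun x => ∑ j : Fin (n + 1), A j * Real.exp (-(R j) * x)) :=
  interlacing_coefficients_pos_and_completelyMonotone_general n R α hR0 hinter A hA
end
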